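/- arXiv:2008.03231 — 3 statements merged into one kernel-verified Lean document; each statement's English description precedes it below -/
import Mathlib

section
/- Let f(x,u) = Z(x,u) a_gt for some a_gt ∈ ℝ^{nℓ}, let data samples (x̃_i^+, x̃_i, ũ_i), i = 1,…,D, satisfy x̃_i^+ = f(x̃_i, ũ_i) + d̃_i with δ_i(d̃_i) ≤ 0 for given polynomials δ_i ∈ ℝ[d], d ∈ ℝ^n (separately bounded noise), let P = {(x,u) ∈ ℝ^n × ℝ^m : p_j(x,u) ≤ 0, j = 1,…,c} for polynomials p_j, and let s ∈ ℝ[x,u] be a supply rate. Suppose there exist an SOS polynomial λ ∈ SOS[x] and SOS polynomials s_j ∈ SOS[x,u,a] (j = 1,…,c) and t_i ∈ SOS[x,u,a] (i = 1,…,D) such that ψ(x,u,a) = s(x,u) − λ(Z(x,u)a) + λ(x) + Σ_{i=1}^{D} δ_i(x̃_i^+ − Z(x̃_i,ũ_i)a) t_i(x,u,a) + Σ_{j=1}^{c} p_j(x,u) s_j(x,u,a) is an SOS polynomial in the variables (x,u,a). Then every a ∈ ℝ^{nℓ} with δ_i(x̃_i^+ − Z(x̃_i,ũ_i)a) ≤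 0 for all i — in particular a_gt — satisfies λ(Z(x,u)a) − λ(x) ≤ s(x,u) for all (x,u) ∈ P; hence f is dissipative on P with respect to s with the (nonnegative) storage function λ. -/
open Matrix

/-- A polynomial is SOS if it is a finite sum of squares of real polynomials. -/
def IsSOSPoly {σ : Type*} (p : MvPolynomial σ ℝ) : Prop :=
  ∃ (k : ℕ) (q : Fin k → MvPolynomial σ ℝ), p = ∑ j, (q j) ^ 2

/-- `Zmul z x u a` is `Z(x,u) a` where `Z(x,u) = I_n ⊗ z(x,u)ᵀ ∈ ℝ^{n×nℓ}` and the
coefficient vector `a ∈ ℝ^{nℓ}` is indexed linearly (so `a = vec(Aᵀ)`). -/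
noncomputable def Zmul {n m ℓ : ℕ} (z : Fin ℓ → MvPolynomial (Fin (n + m)) ℝ)
    (x : Fin n → ℝ) (u : Fin m → ℝ) (a : Fin (n * ℓ) → ℝ) : Fin n → ℝ :=
  fun i => ∑ j : Fin ℓ,
    MvPolynomial.eval (Fin.append x u) (z j) * a (finProdFinEquiv (i, j))


lemma sos_nonneg {σ : Type*} {p : MvPolynomial σ ℝ} (h : IsSOSPoly p)
    (v : σ → ℝ) : 0 ≤ MvPolynomial.eval v p := by
  obtain ⟨k, q, rfl⟩ := h
  simp only [map_sum, map_pow]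
  exact Finset.sum_nonneg fun j _ => sq_nonneg _

/-- Theorem 1: data-driven dissipativity verification for separately bounded noise.
If `ψ(x,u,a) = s(x,u) − λ(Z(x,u)a) + λ(x) + ∑ᵢ δᵢ(x̃ᵢ⁺ − Z(x̃ᵢ,ũᵢ)a) tᵢ(x,u,a)
+ ∑ⱼ pⱼ(x,u) sⱼ(x,u,a)` is SOS for an SOS storage function `λ` and SOS multipliers
`tᵢ, sⱼ`, then every coefficient vector `a` consistent with the data — in particular the
ground-truth one — satisfies the dissipation inequality `λ(Z(x,u)a) − λ(x) ≤ s(x,u)`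
on the constraint set; hence `f` is dissipative w.r.t. `s` with nonnegative storage `λ`. -/
theorem stmt3 {n m ℓ D c : ℕ}
    (z : Fin ℓ → MvPolynomial (Fin (n + m)) ℝ)
    (δ : Fin D → MvPolynomial (Fin n) ℝ)
    (p : Fin c → MvPolynomial (Fin (n + m)) ℝ)
    (s : MvPolynomial (Fin (n + m)) ℝ)
    (xp xd : Fin D → Fin n → ℝ) (ud : Fin D → Fin m → ℝ)
    (agt : Fin (n * ℓ) → ℝ) (dn : Fin D → Fin n → ℝ)
    (f : (Fin n → ℝ) → (Fin m → ℝ) → (Fin n → ℝ))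
    (hf : ∀ x u, f x u = Zmul z x u agt)
    (hdata : ∀ i, xp i = f (xd i) (ud i) + dn i)
    (hnoise : ∀ i, MvPolynomial.eval (dn i) (δ i) ≤ 0)
    (lam : MvPolynomial (Fin n) ℝ) (hlam : IsSOSPoly lam)
    (sj : Fin c → MvPolynomial (Fin (n + m + n * ℓ)) ℝ) (hsj : ∀ j, IsSOSPoly (sj j))
    (t : Fin D → MvPolynomial (Fin (n + m + n * ℓ)) ℝ) (ht : ∀ i, IsSOSPoly (t i))
    (ψ : MvPolynomial (Fin (n + m + n * ℓ)) ℝ) (hψsos : IsSOSPoly ψ)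
    (hψ : ∀ (x : Fin n → ℝ) (u : Fin m → ℝ) (a : Fin (n * ℓ) → ℝ),
      MvPolynomial.eval (Fin.append (Fin.append x u) a) ψ =
        MvPolynomial.eval (Fin.append x u) s
        - MvPolynomial.eval (Zmul z x u a) lam
        + MvPolynomial.eval x lam
        + ∑ i, MvPolynomial.eval (xp i - Zmul z (xd i) (ud i) a) (δ i) *
            MvPolynomial.eval (Fin.append (Fin.append x u) a) (t i)
        + ∑ j, MvPolynomial.eval (Fin.append x u) (p j) *
            MvPolynomial.eval (Fin.append (Fin.append x u) a) (sj j)) :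
    ((∀ a : Fin (n * ℓ) → ℝ,
        (∀ i, MvPolynomial.eval (xp i - Zmul z (xd i) (ud i) a) (δ i) ≤ 0) →
        ∀ (x : Fin n → ℝ) (u : Fin m → ℝ),
          (∀ j, MvPolynomial.eval (Fin.append x u) (p j) ≤ 0) →
          MvPolynomial.eval (Zmul z x u a) lam - MvPolynomial.eval x lam ≤
            MvPolynomial.eval (Fin.append x u) s) ∧
      (∀ (x : Fin n → ℝ) (u : Fin m → ℝ),
        (∀ j, MvPolynomial.eval (Fin.append x u) (p j) ≤ 0) →
        MvPolynomial.eval (f x u) lam - MvPolynomial.eval x lam ≤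
          MvPolynomial.eval (Fin.append x u) s) ∧
      (∀ x : Fin n → ℝ, 0 ≤ MvPolynomial.eval x lam)) := by
  have main : ∀ a : Fin (n * ℓ) → ℝ,
      (∀ i, MvPolynomial.eval (xp i - Zmul z (xd i) (ud i) a) (δ i) ≤ 0) →
      ∀ (x : Fin n → ℝ) (u : Fin m → ℝ),
        (∀ j, MvPolynomial.eval (Fin.append x u) (p j) ≤ 0) →
        MvPolynomial.eval (Zmul z x u a) lam - MvPolynomial.eval x lam ≤
          MvPolynomial.eval (Fin.append x u) s := by
    intro a ha x u hp
    have hψ0 := sos_nonneg hψsos (Fin.append (Fin.append x u) a)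
    rw [hψ x u a] at hψ0
    have h1 : ∑ i, MvPolynomial.eval (xp i - Zmul z (xd i) (ud i) a) (δ i) *
        MvPolynomial.eval (Fin.append (Fin.append x u) a) (t i) ≤ 0 :=
      Finset.sum_nonpos fun i _ =>
        mul_nonpos_of_nonpos_of_nonneg (ha i) (sos_nonneg (ht i) _)
    have h2 : ∑ j, MvPolynomial.eval (Fin.append x u) (p j) *
        MvPolynomial.eval (Fin.append (Fin.append x u) a) (sj j) ≤ 0 :=
      Finset.sum_nonpos fun j _ =>
        mul_nonpos_of_nonpos_of_nonneg (hp j) (sos_nonneg (hsj j) _)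
    linarith
  refine ⟨main, ?_, fun x => sos_nonneg hlam x⟩
  intro x u hp
  have hgt : ∀ i, MvPolynomial.eval (xp i - Zmul z (xd i) (ud i) agt) (δ i) ≤ 0 := by
    intro i
    have : xp i - Zmul z (xd i) (ud i) agt = dn i := by
      rw [hdata i, hf]; abel
    rw [this]; exact hnoise i
  have := main agt hgt x u hp
  rwa [hf]
end

section
/- Let f(x,u) = Z(x,u) a_gt for some a_gt ∈ ℝ^{nℓ}, and let data samples (x̃_i^+, x̃_i, ũ_i), i = 1,…,D, satisfy x̃_i^+ = f(x̃_i, ũ_i) + d̃_i where each noise vector satisfies the quadratic bound δ(d̃_i) ≤ 0 with δ(d) = [d;1]^T [[Δ_1, Δ_2],[Δ_2^T, Δ_3]] [d;1], Δ_1 ∈ ℝ^{n×n} positive definite, Δ_2 ∈ ℝ^{n×1}, Δ_3 ≤ 0 scalar. Let P = {(x,u) : p_j(x,u) ≤ 0, j = 1,…,c}, let s ∈ ℝ[x,u], write Z̃_i = Z(x̃_i, ũ_i), and define the data matrices Q_i ∈ ℝ^{(nℓ+1)×(nℓ+1)} by Q_i = [[Z̃_i^T Δ_1 Z̃_i, −Z̃_i^T(Δ_1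 x̃_i^+ + Δ_2)], [−(x̃_i^{+T} Δ_1 + Δ_2^T) Z̃_i, [x̃_i^+;1]^T [[Δ_1,Δ_2],[Δ_2^T,Δ_3]] [x̃_i^+;1]]]. Suppose there exist a positive semidefinite matrix P ∈ ℝ^{n×n}, SOS polynomials t_i ∈ SOS[x,u] (i = 1,…,D), and SOS matrices S_j ∈ SOS[x,u]^{(nℓ+1)×(nℓ+1)} (j = 1,…,c) such that Ψ(x,u) = Σ_{j=1}^{c} p_j(x,u) S_j(x,u) + Σ_{i=1}^{D} Q_i t_i(x,u) + [[−Z(x,u)^T P Z(x,u), 0],[0, s(x,u) + x^T P x]] is an SOS matrix in (x,u). Then every a ∈ ℝ^{nℓ} with [a;1]^T Q_i [a;1] ≤ 0 for all i — in particular a_gt — satisfies (Z(x,u)a)^T P (Z(x,u)a) − x^T P x ≤ s(x,u) for all (x,u) ∈ P; hence f is dissipative on P with respect to s with storage function λ(x) = x^T P x. -/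
open Matrix

/-- A polynomial matrix `P ∈ ℝ[x]^{r×r}` is an SOS matrix if `P = Qᵀ * Q`
for some polynomial matrix `Q ∈ ℝ[x]^{s×r}`. -/
def IsSOSMatrix {σ : Type*} {ι : Type*} (P : Matrix ι ι (MvPolynomial σ ℝ)) : Prop :=
  ∃ (s : ℕ) (Q : Matrix (Fin s) ι (MvPolynomial σ ℝ)), P = Qᵀ * Q

/-- The matrix `Z(x,u) = I_n ⊗ z(x,u)ᵀ ∈ ℝ^{n×nℓ}`, evaluated at `(x,u)`, with columns
indexed by pairs `(k,j) ∈ Fin n × Fin ℓ` (so `Z(x,u) a = A z(x,u)` for `a (k,j) = A k j`). -/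
noncomputable def Zm {n m ℓ : ℕ} (z : Fin ℓ → MvPolynomial (Fin (n + m)) ℝ)
    (x : Fin n → ℝ) (u : Fin m → ℝ) : Matrix (Fin n) (Fin n × Fin ℓ) ℝ :=
  Matrix.of fun k kj =>
    if kj.1 = k then MvPolynomial.eval (Fin.append x u) (z kj.2) else 0

/-- The data-dependent matrices `Q_i` of Corollary 1 (for quadratically bounded noise
`δ(d) = [d;1]ᵀ [[Δ₁,Δ₂],[Δ₂ᵀ,Δ₃]] [d;1]`). -/
noncomputable def Qmat {n m ℓ : ℕ} (z : Fin ℓ → MvPolynomial (Fin (n + m)) ℝ)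
    (Δ1 : Matrix (Fin n) (Fin n) ℝ) (Δ2 : Fin n → ℝ) (Δ3 : ℝ)
    (xpi xdi : Fin n → ℝ) (udi : Fin m → ℝ) :
    Matrix ((Fin n × Fin ℓ) ⊕ Unit) ((Fin n × Fin ℓ) ⊕ Unit) ℝ :=
  Matrix.fromBlocks
    ((Zm z xdi udi)ᵀ * Δ1 * Zm z xdi udi)
    (Matrix.of fun kj _ => -((Zm z xdi udi)ᵀ.mulVec (Δ1.mulVec xpi + Δ2) kj))
    (Matrix.of fun _ kj => -((Zm z xdi udi)ᵀ.mulVec (Δ1.mulVec xpi + Δ2) kj))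
    (Matrix.of fun _ _ => xpi ⬝ᵥ Δ1.mulVec xpi + 2 * (Δ2 ⬝ᵥ xpi) + Δ3)

/-! Evaluate the quadratic form of `Ψ(x,u)` at `[a;1]`. It is nonnegative because `Ψ` is an SOS
matrix; on the constraint set each `pⱼ Sⱼ` term is nonpositive, and each `tᵢ Qᵢ` term is
nonpositive when `[a;1]ᵀ Qᵢ [a;1] ≤ 0` (S-procedure). What is left is
`s + xᵀPx − (Za)ᵀP(Za) ≥ 0`. The ground truth `a_gt` satisfies the data constraints because
`[a;1]ᵀ Qᵢ [a;1] = δ(x̃ᵢ⁺ − Z̃ᵢ a)` and the residual at `a_gt` is the noise `d̃ᵢ`. -/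

open MvPolynomial

theorem IsSOSPoly.eval_nonneg {σ : Type*} {p : MvPolynomial σ ℝ} (h : IsSOSPoly p)
    (x : σ → ℝ) : 0 ≤ eval x p := by
  obtain ⟨k, q, rfl⟩ := h
  simp only [map_sum, map_pow]
  exact Finset.sum_nonneg fun j _ => sq_nonneg _

theorem dotProduct_transpose_mul_mul_mulVec {ι κ : Type*} [Fintype ι] [Fintype κ]
    (Z : Matrix κ ι ℝ) (P : Matrix κ κ ℝ) (a b : ι → ℝ) :
    a ⬝ᵥ (Zᵀ * P * Z) *ᵥ b = Z *ᵥ a ⬝ᵥ P *ᵥ (Z *ᵥ b) := by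
  rw [Matrix.mul_assoc, ← mulVec_mulVec, ← mulVec_mulVec, dotProduct_transpose_mulVec,
    dotProduct_comm]

theorem IsSOSMatrix.dotProduct_map_eval_mulVec_nonneg {σ ι : Type*} [Fintype ι]
    {M : Matrix ι ι (MvPolynomial σ ℝ)} (h : IsSOSMatrix M) (x : σ → ℝ) (v : ι → ℝ) :
    0 ≤ v ⬝ᵥ M.map (eval x) *ᵥ v := by
  obtain ⟨s, Q, rfl⟩ := h
  rw [Matrix.map_mul, transpose_map, ← mulVec_mulVec, dotProduct_transpose_mulVec]
  exact Finset.sum_nonneg fun i _ => mul_self_nonneg _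

theorem dotProduct_sum_smul_mulVec {ι κ : Type*} [Fintype ι] [Fintype κ] (c : κ → ℝ)
    (A : κ → Matrix ι ι ℝ) (v : ι → ℝ) :
    v ⬝ᵥ (∑ k, c k • A k) *ᵥ v = ∑ k, c k * (v ⬝ᵥ A k *ᵥ v) := by
  simp only [sum_mulVec, smul_mulVec, dotProduct_sum, dotProduct_smul, smul_eq_mul]

theorem dotProduct_mulVec_nonneg_of_sProcedure {ι κ μ : Type*} [Fintype ι] [Fintype κ]
    [Fintype μ] {Ψ N : Matrix ι ι ℝ} {p : κ → ℝ} {S : κ → Matrix ι ι ℝ} {t : μ → ℝ}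
    {Q : μ → Matrix ι ι ℝ} {v : ι → ℝ} (hΨ : Ψ = ∑ j, p j • S j + ∑ i, t i • Q i + N)
    (hΨv : 0 ≤ v ⬝ᵥ Ψ *ᵥ v) (hp : ∀ j, p j ≤ 0) (hS : ∀ j, 0 ≤ v ⬝ᵥ S j *ᵥ v)
    (ht : ∀ i, 0 ≤ t i) (hQ : ∀ i, v ⬝ᵥ Q i *ᵥ v ≤ 0) :
    0 ≤ v ⬝ᵥ N *ᵥ v := by
  rw [hΨ, add_mulVec, add_mulVec, dotProduct_add, dotProduct_add, dotProduct_sum_smul_mulVec,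
    dotProduct_sum_smul_mulVec] at hΨv
  have hpS : ∑ j, p j * (v ⬝ᵥ S j *ᵥ v) ≤ 0 :=
    Finset.sum_nonpos fun j _ => mul_nonpos_of_nonpos_of_nonneg (hp j) (hS j)
  have htQ : ∑ i, t i * (v ⬝ᵥ Q i *ᵥ v) ≤ 0 :=
    Finset.sum_nonpos fun i _ => mul_nonpos_of_nonneg_of_nonpos (ht i) (hQ i)
  linarith

theorem sumElim_dotProduct_fromBlocks_mulVec {ι κ : Type*} [Fintype ι] [Fintype κ]
    (A : Matrix ι ι ℝ) (B : Matrix ι κ ℝ) (C : Matrix κ ι ℝ) (D : Matrix κ κ ℝ)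
    (a : ι → ℝ) (b : κ → ℝ) :
    Sum.elim a b ⬝ᵥ fromBlocks A B C D *ᵥ Sum.elim a b =
      a ⬝ᵥ A *ᵥ a + a ⬝ᵥ B *ᵥ b + b ⬝ᵥ C *ᵥ a + b ⬝ᵥ D *ᵥ b := by
  rw [fromBlocks_mulVec, sumElim_dotProduct_sumElim, dotProduct_add, dotProduct_add,
    Sum.elim_comp_inl, Sum.elim_comp_inr]
  ring

theorem sumElim_one_dotProduct_fromBlocks_unit_mulVec {ι : Type*} [Fintype ι]
    (A : Matrix ι ι ℝ) (β γ : ι → ℝ) (δ : ℝ) (a : ι → ℝ) :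
    Sum.elim a (fun _ : Unit => 1) ⬝ᵥ
        fromBlocks A (of fun i (_ : Unit) => β i) (of fun (_ : Unit) i => γ i)
          (of fun _ _ => δ) *ᵥ Sum.elim a (fun _ => 1) =
      a ⬝ᵥ A *ᵥ a + a ⬝ᵥ β + γ ⬝ᵥ a + δ := by
  rw [sumElim_dotProduct_fromBlocks_mulVec]
  simp [mulVec, dotProduct]

theorem sumElim_one_dotProduct_storageBlock_mulVec {ι κ : Type*} [Fintype ι] [Fintype κ]
    (Z : Matrix κ ι ℝ) (P : Matrix κ κ ℝ) (c : ℝ) (a : ι → ℝ) :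
    Sum.elim a (fun _ => 1) ⬝ᵥ
        fromBlocks (-(Zᵀ * P * Z)) 0 0 (of fun (_ _ : Unit) => c) *ᵥ Sum.elim a (fun _ => 1) =
      c - Z *ᵥ a ⬝ᵥ P *ᵥ (Z *ᵥ a) := by
  have h := sumElim_one_dotProduct_fromBlocks_unit_mulVec (-(Zᵀ * P * Z)) 0 0 c a
  rw [neg_mulVec, dotProduct_neg, dotProduct_transpose_mul_mul_mulVec, dotProduct_zero,
    zero_dotProduct] at h
  exact h.trans (by ring)

theorem sumElim_one_dotProduct_Qmat_mulVec {n m ℓ : ℕ}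
    (z : Fin ℓ → MvPolynomial (Fin (n + m)) ℝ) {Δ1 : Matrix (Fin n) (Fin n) ℝ}
    (hΔ1 : Δ1.IsSymm) (Δ2 : Fin n → ℝ) (Δ3 : ℝ) (xpi xdi : Fin n → ℝ) (udi : Fin m → ℝ)
    (a : Fin n × Fin ℓ → ℝ) :
    Sum.elim a (fun _ => 1) ⬝ᵥ Qmat z Δ1 Δ2 Δ3 xpi xdi udi *ᵥ Sum.elim a (fun _ => 1) =
      let d := xpi - Zm z xdi udi *ᵥ a
      d ⬝ᵥ Δ1 *ᵥ d + 2 * (Δ2 ⬝ᵥ d) + Δ3 := by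
  rw [Qmat]
  set Z := Zm z xdi udi
  set y := Δ1 *ᵥ xpi + Δ2
  have hZy : a ⬝ᵥ (fun kj => -((Zᵀ *ᵥ y) kj)) = -(Z *ᵥ a ⬝ᵥ y) := by
    rw [show (fun kj => -((Zᵀ *ᵥ y) kj)) = -(Zᵀ *ᵥ y) from rfl, dotProduct_neg,
      dotProduct_transpose_mulVec, dotProduct_comm]
  have hsymm : Z *ᵥ a ⬝ᵥ Δ1 *ᵥ xpi = xpi ⬝ᵥ Δ1 *ᵥ (Z *ᵥ a) := by
    rw [← dotProduct_transpose_mulVec, hΔ1.eq]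
  rw [sumElim_one_dotProduct_fromBlocks_unit_mulVec, dotProduct_transpose_mul_mul_mulVec,
    dotProduct_comm _ a, hZy]
  simp only [y, mulVec_sub, dotProduct_sub, sub_dotProduct, dotProduct_add, hsymm,
    dotProduct_comm (Z *ᵥ a) Δ2]
  ring

theorem stmt4_general {n m ℓ D c : ℕ}
    (z : Fin ℓ → MvPolynomial (Fin (n + m)) ℝ)
    (Δ1 : Matrix (Fin n) (Fin n) ℝ) (Δ2 : Fin n → ℝ) (Δ3 : ℝ)
    (hΔ1 : Δ1.PosDef)
    (p : Fin c → MvPolynomial (Fin (n + m)) ℝ)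
    (s : MvPolynomial (Fin (n + m)) ℝ)
    (xp xd : Fin D → Fin n → ℝ) (ud : Fin D → Fin m → ℝ)
    (agt : Fin n × Fin ℓ → ℝ) (dn : Fin D → Fin n → ℝ)
    (f : (Fin n → ℝ) → (Fin m → ℝ) → (Fin n → ℝ))
    (hf : ∀ x u, f x u = (Zm z x u).mulVec agt)
    (hdata : ∀ i, xp i = f (xd i) (ud i) + dn i)
    (hnoise : ∀ i, dn i ⬝ᵥ Δ1.mulVec (dn i) + 2 * (Δ2 ⬝ᵥ dn i) + Δ3 ≤ 0)
    (P : Matrix (Fin n) (Fin n) ℝ)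
    (t : Fin D → MvPolynomial (Fin (n + m)) ℝ) (ht : ∀ i, IsSOSPoly (t i))
    (S : Fin c → Matrix ((Fin n × Fin ℓ) ⊕ Unit) ((Fin n × Fin ℓ) ⊕ Unit)
        (MvPolynomial (Fin (n + m)) ℝ))
    (hS : ∀ j, IsSOSMatrix (S j))
    (Ψ : Matrix ((Fin n × Fin ℓ) ⊕ Unit) ((Fin n × Fin ℓ) ⊕ Unit)
        (MvPolynomial (Fin (n + m)) ℝ))
    (hΨsos : IsSOSMatrix Ψ)
    (hΨ : ∀ (x : Fin n → ℝ) (u : Fin m → ℝ),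
      Ψ.map (MvPolynomial.eval (Fin.append x u)) =
        ∑ j, MvPolynomial.eval (Fin.append x u) (p j) •
            (S j).map (MvPolynomial.eval (Fin.append x u))
        + ∑ i, MvPolynomial.eval (Fin.append x u) (t i) •
            Qmat z Δ1 Δ2 Δ3 (xp i) (xd i) (ud i)
        + Matrix.fromBlocks (-((Zm z x u)ᵀ * P * Zm z x u)) 0 0
            (Matrix.of fun _ _ =>
              MvPolynomial.eval (Fin.append x u) s + x ⬝ᵥ P.mulVec x)) :
    ((∀ a : Fin n × Fin ℓ → ℝ,
        (∀ i, Sum.elim a (fun _ => (1 : ℝ)) ⬝ᵥ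
            (Qmat z Δ1 Δ2 Δ3 (xp i) (xd i) (ud i)).mulVec
              (Sum.elim a fun _ => (1 : ℝ)) ≤ 0) →
        ∀ (x : Fin n → ℝ) (u : Fin m → ℝ),
          (∀ j, MvPolynomial.eval (Fin.append x u) (p j) ≤ 0) →
          (Zm z x u).mulVec a ⬝ᵥ P.mulVec ((Zm z x u).mulVec a) - x ⬝ᵥ P.mulVec x ≤
            MvPolynomial.eval (Fin.append x u) s) ∧
      (∀ (x : Fin n → ℝ) (u : Fin m → ℝ),
        (∀ j, MvPolynomial.eval (Fin.append x u) (p j) ≤ 0) →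
        f x u ⬝ᵥ P.mulVec (f x u) - x ⬝ᵥ P.mulVec x ≤
          MvPolynomial.eval (Fin.append x u) s)) := by
  have hΔ1symm : Δ1.IsSymm := isHermitian_iff_isSymm.1 hΔ1.isHermitian
  have dissipative : ∀ a : Fin n × Fin ℓ → ℝ,
      (∀ i, Sum.elim a (fun _ => (1 : ℝ)) ⬝ᵥ
          (Qmat z Δ1 Δ2 Δ3 (xp i) (xd i) (ud i)).mulVec (Sum.elim a fun _ => (1 : ℝ)) ≤ 0) →
      ∀ (x : Fin n → ℝ) (u : Fin m → ℝ), (∀ j, eval (Fin.append x u) (p j) ≤ 0) →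
        (Zm z x u).mulVec a ⬝ᵥ P.mulVec ((Zm z x u).mulVec a) - x ⬝ᵥ P.mulVec x ≤
          eval (Fin.append x u) s := by
    intro a ha x u hp
    have key := dotProduct_mulVec_nonneg_of_sProcedure (v := Sum.elim a fun _ => 1) (hΨ x u)
      (hΨsos.dotProduct_map_eval_mulVec_nonneg _ _) hp
      (fun j => (hS j).dotProduct_map_eval_mulVec_nonneg _ _) (fun i => (ht i).eval_nonneg _) ha
    rw [sumElim_one_dotProduct_storageBlock_mulVec] at key
    linarith
  refine ⟨dissipative, fun x u hp => ?_⟩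
  rw [hf]
  refine dissipative agt (fun i => ?_) x u hp
  have hresidual : xp i - Zm z (xd i) (ud i) *ᵥ agt = dn i := by
    rw [hdata, hf, add_sub_cancel_left]
  rw [sumElim_one_dotProduct_Qmat_mulVec z hΔ1symm, hresidual]
  exact hnoise i

/-- Corollary 1: data-driven dissipativity verification for quadratically bounded noise.
If `Ψ(x,u) = ∑ⱼ pⱼ(x,u) Sⱼ(x,u) + ∑ᵢ Qᵢ tᵢ(x,u) +
[[−Z(x,u)ᵀ P Z(x,u), 0],[0, s(x,u) + xᵀPx]]` is an SOS matrix for some PSD `P`, SOS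
polynomials `tᵢ` and SOS matrices `Sⱼ`, then every coefficient vector `a` with
`[a;1]ᵀ Qᵢ [a;1] ≤ 0` for all `i` — in particular the ground-truth one — satisfies
`(Z(x,u)a)ᵀ P (Z(x,u)a) − xᵀPx ≤ s(x,u)` on the constraint set; hence `f` is dissipative
w.r.t. `s` with storage function `λ(x) = xᵀPx`. -/
theorem stmt4 {n m ℓ D c : ℕ}
    (z : Fin ℓ → MvPolynomial (Fin (n + m)) ℝ)
    (Δ1 : Matrix (Fin n) (Fin n) ℝ) (Δ2 : Fin n → ℝ) (Δ3 : ℝ)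
    (hΔ1 : Δ1.PosDef) (hΔ3 : Δ3 ≤ 0)
    (p : Fin c → MvPolynomial (Fin (n + m)) ℝ)
    (s : MvPolynomial (Fin (n + m)) ℝ)
    (xp xd : Fin D → Fin n → ℝ) (ud : Fin D → Fin m → ℝ)
    (agt : Fin n × Fin ℓ → ℝ) (dn : Fin D → Fin n → ℝ)
    (f : (Fin n → ℝ) → (Fin m → ℝ) → (Fin n → ℝ))
    (hf : ∀ x u, f x u = (Zm z x u).mulVec agt)
    (hdata : ∀ i, xp i = f (xd i) (ud i) + dn i)
    (hnoise : ∀ i, dn i ⬝ᵥ Δ1.mulVec (dn i) + 2 * (Δ2 ⬝ᵥ dn i) + Δ3 ≤ 0)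
    (P : Matrix (Fin n) (Fin n) ℝ) (hP : P.PosSemidef)
    (t : Fin D → MvPolynomial (Fin (n + m)) ℝ) (ht : ∀ i, IsSOSPoly (t i))
    (S : Fin c → Matrix ((Fin n × Fin ℓ) ⊕ Unit) ((Fin n × Fin ℓ) ⊕ Unit)
        (MvPolynomial (Fin (n + m)) ℝ))
    (hS : ∀ j, IsSOSMatrix (S j))
    (Ψ : Matrix ((Fin n × Fin ℓ) ⊕ Unit) ((Fin n × Fin ℓ) ⊕ Unit)
        (MvPolynomial (Fin (n + m)) ℝ))
    (hΨsos : IsSOSMatrix Ψ)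
    (hΨ : ∀ (x : Fin n → ℝ) (u : Fin m → ℝ),
      Ψ.map (MvPolynomial.eval (Fin.append x u)) =
        ∑ j, MvPolynomial.eval (Fin.append x u) (p j) •
            (S j).map (MvPolynomial.eval (Fin.append x u))
        + ∑ i, MvPolynomial.eval (Fin.append x u) (t i) •
            Qmat z Δ1 Δ2 Δ3 (xp i) (xd i) (ud i)
        + Matrix.fromBlocks (-((Zm z x u)ᵀ * P * Zm z x u)) 0 0
            (Matrix.of fun _ _ =>
              MvPolynomial.eval (Fin.append x u) s + x ⬝ᵥ P.mulVec x)) :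
    ((∀ a : Fin n × Fin ℓ → ℝ,
        (∀ i, Sum.elim a (fun _ => (1 : ℝ)) ⬝ᵥ
            (Qmat z Δ1 Δ2 Δ3 (xp i) (xd i) (ud i)).mulVec
              (Sum.elim a fun _ => (1 : ℝ)) ≤ 0) →
        ∀ (x : Fin n → ℝ) (u : Fin m → ℝ),
          (∀ j, MvPolynomial.eval (Fin.append x u) (p j) ≤ 0) →
          (Zm z x u).mulVec a ⬝ᵥ P.mulVec ((Zm z x u).mulVec a) - x ⬝ᵥ P.mulVec x ≤
            MvPolynomial.eval (Fin.append x u) s) ∧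
      (∀ (x : Fin n → ℝ) (u : Fin m → ℝ),
        (∀ j, MvPolynomial.eval (Fin.append x u) (p j) ≤ 0) →
        f x u ⬝ᵥ P.mulVec (f x u) - x ⬝ᵥ P.mulVec x ≤
          MvPolynomial.eval (Fin.append x u) s)) :=
  stmt4_general z Δ1 Δ2 Δ3 hΔ1 p s xp xd ud agt dn f hf hdata hnoise P t ht S hS Ψ hΨsos hΨ
end

section
/- In the setting of the cumulatively bounded noise description, assume: (i) Δ_1 ⪰ 0 (positive semidefinite); (ii) the data is consistent with a ground-truth system, i.e., there exists A_gt ∈ ℝ^{n×ℓ} and D̃ = [d̃_1 ⋯ d̃_D] ∈ ℝ^{n×D} with [D̃^T; I_n]^T [[Δ_1, Δ_2],[Δ_2^T, Δ_3]] [D̃^T; I_n] ≺ 0 and x̃_i^+ = A_gt z(x̃_i, ũ_i) + d̃_i for all i; and (iii) the matrix [[−Δ̃_1, Δ̃_2],[Δ̃_2^T, −Δ̃_3]] ∈ ℝ^{(ℓ+n)×(ℓ+n)} is invertible, with inverse denoted [[Δ̄_1, Δ̄_2],[Δ̄_2^T, Δ̄_3]]. Then for every A ∈ ℝ^{n×ℓ}: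 [A^T; I_n]^T [[Δ̃_1, Δ̃_2],[Δ̃_2^T, Δ̃_3]] [A^T; I_n] ≺ 0 holds if and only if [I_ℓ; A]^T [[Δ̄_1, Δ̄_2],[Δ̄_2^T, Δ̄_3]] [I_ℓ; A] ≺ 0, where [I_ℓ; A] is the (ℓ+n)×ℓ matrix obtained by stacking I_ℓ on top of A. Moreover Δ̄_3 ⪰ 0. -/
/-!
Put `P = [[-Δ̃₁, Δ̃₂], [Δ̃₂ᵀ, -Δ̃₃]]` and `Q = P⁻¹`. The primal condition at `A` says that `P` is
positive definite on the range of `V = [Aᵀ; -I]`, the dual one that `Q` is negative definite on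
the range of `W = [I; A]`, and `Wᵀ V = 0`. Since `Δ̃ = Gᵀ Δ G` with `G = [[-Z̃ᵀ, X̃⁺ᵀ], [0, I]]`,
the primal matrix at `A` is the noise bound evaluated at the residual `X̃⁺ - A Z̃`, which at
`A_gt` is the ground-truth noise `D̃`. So `P` is positive definite on an `n`-dimensional
subspace and, because `Δ̃₁ = Z̃ Δ₁ Z̃ᵀ ⪰ 0`, negative semidefinite on the `ℓ`-dimensional subspace
`{(y, 0)}`.

For a nondegenerate symmetric form, a nonpositive and a nonnegative subspace have dimensions
adding up to at most the whole dimension: their intersection is orthogonal to their sum. Hence a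
vector that is `P`-orthogonal to a nonnegative subspace of maximal dimension, and not in it, has
negative `P`-value. Applied to `x = Q W c`, whose `P`-value is `cᵀ (Wᵀ Q W) c`, this gives the
dual condition, and the same argument for `-Q` gives the converse. Applied with the roles of the
two subspaces exchanged to `x = Q (0, v)`, which is `P`-orthogonal to `{(y, 0)}`, it gives
`vᵀ Δ̄₃ v ≥ 0`.
-/

open Matrix

/-- `M ≺ 0`: `M` is (symmetric) negative definite. -/
def IsNegDef {ι : Type*} [Fintype ι] (M : Matrix ι ι ℝ) : Prop :=
  (-M).PosDef

open Module

namespace LinearMap.BilinForm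

variable {K V : Type*} [Field K] [LinearOrder K] [IsStrictOrderedRing K]
  [AddCommGroup V] [Module K V] {B : LinearMap.BilinForm K V}

theorem apply_eq_zero_of_apply_self_eq_zero_of_nonneg (hB : B.IsSymm) {S : Submodule K V}
    (hS : ∀ y ∈ S, 0 ≤ B y y) {x y : V} (hx : x ∈ S) (hy : y ∈ S) (hxx : B x x = 0) :
    B x y = 0 := by
  by_contra hxy
  set t := -(1 + B y y) / (2 * B x y)
  have hexpand : B (t • x + y) (t • x + y) = 2 * t * B x y + B y y := by
    simp only [map_add, map_smul, LinearMap.add_apply, LinearMap.smul_apply, smul_eq_mul,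
      hxx, hB.eq y x]
    ring
  have ht : 2 * t * B x y = -(1 + B y y) := by simp only [t]; field_simp
  linarith [hS _ (S.add_mem (S.smul_mem t hx) hy)]

variable [FiniteDimensional K V]

theorem finrank_add_finrank_le_of_nonpos_of_nonneg (hB : B.IsSymm) (hB' : B.Nondegenerate)
    {S T : Submodule K V} (hS : ∀ x ∈ S, B x x ≤ 0) (hT : ∀ x ∈ T, 0 ≤ B x x) :
    finrank K S + finrank K T ≤ finrank K V := by
  have hS' : ∀ x ∈ S, 0 ≤ (-B) x x := fun x hx => by simpa using hS x hx
  have hinf : S ⊓ T ≤ B.orthogonal (S ⊔ T) := by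
    rintro x ⟨hxS, hxT⟩
    have hxx : B x x = 0 := le_antisymm (hS x hxS) (hT x hxT)
    rw [mem_orthogonal_iff]
    intro z hz
    obtain ⟨s, hs, t, ht, rfl⟩ := Submodule.mem_sup.mp hz
    have hsx : (-B) x s = 0 :=
      apply_eq_zero_of_apply_self_eq_zero_of_nonneg hB.neg hS' hxS hs (by simp [hxx])
    have htx : B x t = 0 := apply_eq_zero_of_apply_self_eq_zero_of_nonneg hB hT hxT ht hxx
    simp only [map_add, LinearMap.add_apply, hB.eq s x, hB.eq t x, htx]
    simpa using hsx
  have h1 := Submodule.finrank_sup_add_finrank_inf_eq S T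
  have h2 := Submodule.finrank_mono hinf
  have h3 := finrank_orthogonal hB' (S ⊔ T)
  have h4 := Submodule.finrank_le (S ⊔ T)
  omega

theorem apply_self_neg_of_mem_orthogonal_of_notMem (hB : B.IsSymm) (hB' : B.Nondegenerate)
    {S T : Submodule K V} (hS : ∀ x ∈ S, B x x ≤ 0) (hT : ∀ x ∈ T, 0 ≤ B x x)
    (hdim : finrank K V ≤ finrank K S + finrank K T) {x : V} (hxT : x ∈ B.orthogonal T)
    (hx : x ∉ T) : B x x < 0 := by
  by_contra! hxx
  have hT' : ∀ y ∈ T ⊔ K ∙ x, 0 ≤ B y y := by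
    intro y hy
    obtain ⟨t, ht, _, hu, rfl⟩ := Submodule.mem_sup.mp hy
    obtain ⟨a, rfl⟩ := Submodule.mem_span_singleton.mp hu
    have hexpand : B (t + a • x) (t + a • x) = B t t + a * a * B x x := by
      simp only [map_add, map_smul, LinearMap.add_apply, LinearMap.smul_apply, smul_eq_mul,
        hB.eq x t, mem_orthogonal_iff.mp hxT t ht]
      ring
    rw [hexpand]
    exact add_nonneg (hT t ht) (mul_nonneg (mul_self_nonneg a) hxx)
  have := finrank_add_finrank_le_of_nonpos_of_nonneg hB hB' hS hT'
  rw [Submodule.finrank_sup_span_singleton hx] at this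
  omega

end LinearMap.BilinForm

namespace Matrix

section QuadraticForm

variable {ι σ κ μ : Type*} [Fintype ι] [Fintype σ] [Fintype κ] [Fintype μ] {P Q : Matrix ι ι ℝ}

theorem mulVec_dotProduct_mulVec_mulVec (M : Matrix ι ι ℝ) (V : Matrix ι κ ℝ) (u v : κ → ℝ) :
    (V *ᵥ u) ⬝ᵥ (M *ᵥ (V *ᵥ v)) = u ⬝ᵥ ((Vᵀ * M * V) *ᵥ v) := by
  rw [← mulVec_mulVec, ← mulVec_mulVec, dotProduct_mulVec u Vᵀ, vecMul_transpose]

theorem IsSymm.transpose_mul_mul {m : Type*} {M : Matrix ι ι ℝ} (hM : M.IsSymm)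
    (W : Matrix ι m ℝ) : (Wᵀ * M * W).IsSymm := by
  simp only [IsSymm, transpose_mul, transpose_transpose, hM.eq, Matrix.mul_assoc]

theorem injective_mulVec_of_posDef {V : Matrix ι κ ℝ} (h : (Vᵀ * P * V).PosDef) :
    Function.Injective V.mulVec := by
  refine (injective_iff_map_eq_zero (mulVecLin V)).mpr fun u hu => ?_
  by_contra hu0
  have := h.dotProduct_mulVec_pos hu0
  rw [star_trivial, ← mulVec_dotProduct_mulVec_mulVec, ← mulVecLin_apply, hu] at this
  simp at this

omit [Fintype ι] in
theorem finrank_range_mulVecLin {V : Matrix ι κ ℝ} (hV : Function.Injective V.mulVec) :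
    finrank ℝ (LinearMap.range V.mulVecLin) = Fintype.card κ := by
  rw [LinearMap.finrank_range_of_inj hV, finrank_fintype_fun_eq_card]

theorem dotProduct_mulVec_eq_zero_of_mem_range {V : Matrix ι κ ℝ} {x : ι → ℝ}
    (hVx : Vᵀ *ᵥ (P *ᵥ x) = 0) (hx : x ∈ LinearMap.range V.mulVecLin) :
    x ⬝ᵥ (P *ᵥ x) = 0 := by
  obtain ⟨d, rfl⟩ := hx
  rw [mulVecLin_apply] at hVx ⊢
  rw [dotProduct_comm, ← dotProduct_transpose_mulVec, hVx, dotProduct_zero]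

variable [DecidableEq ι]

theorem dotProduct_mulVec_neg_of_transpose_mulVec_eq_zero (hP : P.IsSymm) (hdet : P.det ≠ 0)
    {U : Matrix ι σ ℝ} (hU : Function.Injective U.mulVec) (hUPU : (-(Uᵀ * P * U)).PosSemidef)
    {V : Matrix ι κ ℝ} (hV : Function.Injective V.mulVec) (hVPV : (Vᵀ * P * V).PosSemidef)
    (hcard : Fintype.card ι ≤ Fintype.card σ + Fintype.card κ) {x : ι → ℝ}
    (hVx : Vᵀ *ᵥ (P *ᵥ x) = 0) (hx : x ∉ LinearMap.range V.mulVecLin) :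
    x ⬝ᵥ (P *ᵥ x) < 0 := by
  have key := LinearMap.BilinForm.apply_self_neg_of_mem_orthogonal_of_notMem (B := P.toBilin')
    (S := LinearMap.range U.mulVecLin) (T := LinearMap.range V.mulVecLin)
    (isSymm_toBilin'_iff_isSymm.mpr hP)
    (LinearMap.BilinForm.nondegenerate_toBilin'_of_det_ne_zero' P hdet) ?_ ?_ ?_ ?_ hx
  · simpa only [toBilin'_apply'] using key
  · rintro _ ⟨u, rfl⟩
    have := hUPU.dotProduct_mulVec_nonneg u
    rw [star_trivial, neg_mulVec, dotProduct_neg, ← mulVec_dotProduct_mulVec_mulVec] at this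
    simpa [toBilin'_apply'] using this
  · rintro _ ⟨v, rfl⟩
    have := hVPV.dotProduct_mulVec_nonneg v
    rw [star_trivial, ← mulVec_dotProduct_mulVec_mulVec] at this
    simpa [toBilin'_apply'] using this
  · rwa [finrank_range_mulVecLin hU, finrank_range_mulVecLin hV, finrank_fintype_fun_eq_card]
  · rintro _ ⟨v, rfl⟩
    rw [toBilin'_apply', mulVecLin_apply, ← vecMul_transpose, ← dotProduct_mulVec, hVx,
      dotProduct_zero]

theorem IsSymm.of_mul_eq_one (hP : P.IsSymm) (hPQ : P * Q = 1) : Q.IsSymm :=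
  inv_eq_right_inv hPQ ▸ hP.inv

theorem dotProduct_transpose_mul_mul_mulVec_of_mul_eq_one (hPQ : P * Q = 1)
    (W : Matrix ι μ ℝ) (c : μ → ℝ) :
    c ⬝ᵥ ((Wᵀ * Q * W) *ᵥ c) = (Q *ᵥ (W *ᵥ c)) ⬝ᵥ (P *ᵥ (Q *ᵥ (W *ᵥ c))) := by
  rw [mulVec_mulVec _ P Q, hPQ, one_mulVec, dotProduct_comm (Q *ᵥ _),
    mulVec_dotProduct_mulVec_mulVec]

theorem posDef_neg_transpose_mul_mul_of_mul_eq_one (hP : P.IsSymm) (hPQ : P * Q = 1)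
    {U : Matrix ι σ ℝ} (hU : Function.Injective U.mulVec) (hUPU : (-(Uᵀ * P * U)).PosSemidef)
    {V : Matrix ι κ ℝ} (hVPV : (Vᵀ * P * V).PosDef)
    (hcard : Fintype.card ι ≤ Fintype.card σ + Fintype.card κ)
    {W : Matrix ι μ ℝ} (hW : Function.Injective W.mulVec) (hWV : Wᵀ * V = 0) :
    (-(Wᵀ * Q * W)).PosDef := by
  refine PosDef.of_dotProduct_mulVec_pos ?_ fun c hc => ?_
  · exact isHermitian_iff_isSymm.mpr ((hP.of_mul_eq_one hPQ).transpose_mul_mul W).neg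
  set x := Q *ᵥ (W *ᵥ c) with hx
  have hPx : P *ᵥ x = W *ᵥ c := by rw [hx, mulVec_mulVec, hPQ, one_mulVec]
  have hVx : Vᵀ *ᵥ (P *ᵥ x) = 0 := by
    rw [hPx, mulVec_mulVec, show Vᵀ * W = 0 by simpa using congrArg transpose hWV, zero_mulVec]
  have hxV : x ∉ LinearMap.range V.mulVecLin := by
    rintro ⟨d, hd⟩
    rw [mulVecLin_apply] at hd
    have hxx := dotProduct_mulVec_eq_zero_of_mem_range hVx ⟨d, hd⟩
    have hd0 : d = 0 := by
      by_contra hd0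
      have := hVPV.dotProduct_mulVec_pos hd0
      rw [star_trivial, ← mulVec_dotProduct_mulVec_mulVec, hd, hxx] at this
      exact lt_irrefl _ this
    apply hc
    apply hW
    rw [← hPx, ← hd, hd0]
    simp
  have := dotProduct_mulVec_neg_of_transpose_mulVec_eq_zero hP
    (det_ne_zero_of_right_inverse hPQ) hU hUPU (injective_mulVec_of_posDef hVPV)
    hVPV.posSemidef hcard hVx hxV
  rw [star_trivial, neg_mulVec, dotProduct_neg,
    dotProduct_transpose_mul_mul_mulVec_of_mul_eq_one hPQ]
  linarith

theorem posSemidef_transpose_mul_mul_of_mul_eq_one (hP : P.IsSymm) (hPQ : P * Q = 1)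
    {U : Matrix ι σ ℝ} (hU : Function.Injective U.mulVec) (hUPU : (-(Uᵀ * P * U)).PosSemidef)
    {V : Matrix ι κ ℝ} (hVPV : (Vᵀ * P * V).PosDef)
    (hcard : Fintype.card ι ≤ Fintype.card σ + Fintype.card κ)
    {F : Matrix ι μ ℝ} (hUF : Uᵀ * F = 0) : (Fᵀ * Q * F).PosSemidef := by
  refine PosSemidef.of_dotProduct_mulVec_nonneg ?_ fun c => ?_
  · exact isHermitian_iff_isSymm.mpr ((hP.of_mul_eq_one hPQ).transpose_mul_mul F)
  set x := Q *ᵥ (F *ᵥ c) with hx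
  have hPx : P *ᵥ x = F *ᵥ c := by rw [hx, mulVec_mulVec, hPQ, one_mulVec]
  have hUx : Uᵀ *ᵥ (-P *ᵥ x) = 0 := by
    rw [neg_mulVec, mulVec_neg, hPx, mulVec_mulVec, hUF, zero_mulVec, neg_zero]
  rw [star_trivial, dotProduct_transpose_mul_mul_mulVec_of_mul_eq_one hPQ]
  by_cases hxU : x ∈ LinearMap.range U.mulVecLin
  · have := dotProduct_mulVec_eq_zero_of_mem_range hUx hxU
    rw [neg_mulVec, dotProduct_neg, neg_eq_zero] at this
    exact this.ge
  -- `-P` is nonpositive on the range of `V` and nonnegative on that of `U`.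
  have := dotProduct_mulVec_neg_of_transpose_mulVec_eq_zero hP.neg
    (det_ne_zero_of_right_inverse (neg_mul_neg P Q ▸ hPQ) (B := -Q))
    (injective_mulVec_of_posDef hVPV) (by simpa using hVPV.posSemidef) hU
    (by simpa using hUPU) (add_comm (Fintype.card σ) _ ▸ hcard) hUx hxU
  rw [neg_mulVec, dotProduct_neg] at this
  linarith

theorem posDef_transpose_mul_mul_iff_of_mul_eq_one (hP : P.IsSymm) (hPQ : P * Q = 1)
    {U : Matrix ι σ ℝ} (hU : Function.Injective U.mulVec) (hUPU : (-(Uᵀ * P * U)).PosSemidef)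
    {V₀ : Matrix ι κ ℝ} (hV₀ : (V₀ᵀ * P * V₀).PosDef)
    (hcard : Fintype.card ι ≤ Fintype.card σ + Fintype.card κ)
    {V : Matrix ι κ ℝ} (hV : Function.Injective V.mulVec)
    {W : Matrix ι σ ℝ} (hW : Function.Injective W.mulVec) (hWV : Wᵀ * V = 0) :
    (Vᵀ * P * V).PosDef ↔ (-(Wᵀ * Q * W)).PosDef := by
  have hQP : Q * P = 1 := mul_eq_one_comm.mp hPQ
  refine ⟨fun h => posDef_neg_transpose_mul_mul_of_mul_eq_one hP hPQ hU hUPU h hcard hW hWV,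
    fun h => ?_⟩
  have hPV₀ : Function.Injective (P * V₀).mulVec := by
    intro u v huv
    have := congrArg (Q *ᵥ ·) huv
    simp only [mulVec_mulVec, ← Matrix.mul_assoc, hQP, Matrix.one_mul] at this
    exact injective_mulVec_of_posDef hV₀ this
  have hPV₀Q : (P * V₀)ᵀ * Q * (P * V₀) = V₀ᵀ * P * V₀ := by
    rw [transpose_mul, hP.eq]
    simp only [Matrix.mul_assoc]
    rw [← Matrix.mul_assoc Q, hQP, Matrix.one_mul]
  have hVW : Vᵀ * W = 0 := by simpa using congrArg transpose hWV
  -- The forward direction for `-Q`, whose inverse is `-P` and which is nonpositive on `P V₀`.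
  simpa using posDef_neg_transpose_mul_mul_of_mul_eq_one (P := -Q) (Q := -P)
    (hP.of_mul_eq_one hPQ).neg (by rw [neg_mul_neg, hQP]) hPV₀
    (by rw [Matrix.mul_neg, Matrix.neg_mul, neg_neg, hPV₀Q]; exact hV₀.posSemidef)
    (by simpa using h) (by omega) hV hVW

end QuadraticForm

section Blocks

variable {l m n o : Type*}

theorem injective_mulVec_fromRows_left [Fintype o] {A₁ : Matrix m o ℝ}
    (h : Function.Injective A₁.mulVec) (A₂ : Matrix n o ℝ) :
    Function.Injective (fromRows A₁ A₂).mulVec := fun u v huv =>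
  h (by simpa [fromRows_mulVec] using congrArg (· ∘ Sum.inl) huv)

theorem injective_mulVec_fromRows_right [Fintype o] (A₁ : Matrix m o ℝ) {A₂ : Matrix n o ℝ}
    (h : Function.Injective A₂.mulVec) : Function.Injective (fromRows A₁ A₂).mulVec :=
  fun u v huv => h (by simpa [fromRows_mulVec] using congrArg (· ∘ Sum.inr) huv)

theorem fromRows_sandwich_fromBlocks [Fintype m] [Fintype n] (M₁₁ : Matrix m m ℝ)
    (M₁₂ : Matrix m n ℝ) (M₂₁ : Matrix n m ℝ) (M₂₂ : Matrix n n ℝ) (X : Matrix m o ℝ)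
    (Y : Matrix n o ℝ) :
    (fromRows X Y)ᵀ * fromBlocks M₁₁ M₁₂ M₂₁ M₂₂ * fromRows X Y =
      Xᵀ * M₁₁ * X + Xᵀ * M₁₂ * Y + Yᵀ * M₂₁ * X + Yᵀ * M₂₂ * Y := by
  rw [transpose_fromRows, fromCols_mul_fromBlocks, fromCols_mul_fromRows]
  simp only [Matrix.add_mul]
  abel

theorem posSemidef_neg_fromRows_one_zero_sandwich_fromBlocks [Fintype l] [Fintype m] [Fintype n]
    [DecidableEq l] {Δ1 : Matrix m m ℝ} (hΔ1 : Δ1.PosSemidef) (Z : Matrix l m ℝ)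
    (B : Matrix l n ℝ) (C : Matrix n l ℝ) (D : Matrix n n ℝ) :
    (-((fromRows (1 : Matrix l l ℝ) (0 : Matrix n l ℝ))ᵀ * fromBlocks (-(Z * Δ1 * Zᵀ)) B C D *
      fromRows (1 : Matrix l l ℝ) (0 : Matrix n l ℝ))).PosSemidef := by
  simpa [fromRows_sandwich_fromBlocks, conjTranspose_eq_transpose_of_trivial] using
    hΔ1.mul_mul_conjTranspose_same Z

variable [Fintype m] [Fintype n] [DecidableEq n]

theorem fromRows_neg_one_sandwich_fromBlocks_neg (A : Matrix m m ℝ) (B : Matrix m n ℝ)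
    (D : Matrix n n ℝ) (X : Matrix m n ℝ) :
    (fromRows X (-1 : Matrix n n ℝ))ᵀ * fromBlocks (-A) B Bᵀ (-D) *
        fromRows X (-1 : Matrix n n ℝ) =
      -((fromRows X (1 : Matrix n n ℝ))ᵀ * fromBlocks A B Bᵀ D *
        fromRows X (1 : Matrix n n ℝ)) := by
  rw [fromRows_sandwich_fromBlocks, fromRows_sandwich_fromBlocks]
  simp only [transpose_neg, transpose_one, Matrix.mul_neg, Matrix.neg_mul, Matrix.mul_one,
    Matrix.one_mul, neg_neg, neg_add]

theorem fromRows_zero_one_sandwich_fromBlocks (M₁₁ : Matrix m m ℝ) (M₁₂ : Matrix m n ℝ)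
    (M₂₁ : Matrix n m ℝ) (M₂₂ : Matrix n n ℝ) :
    (fromRows (0 : Matrix m n ℝ) (1 : Matrix n n ℝ))ᵀ * fromBlocks M₁₁ M₁₂ M₂₁ M₂₂ *
      fromRows (0 : Matrix m n ℝ) (1 : Matrix n n ℝ) = M₂₂ := by
  simp [fromRows_sandwich_fromBlocks]

variable [DecidableEq m]

theorem transpose_fromRows_one_mul_fromRows_neg_one (A : Matrix n m ℝ) :
    (fromRows (1 : Matrix m m ℝ) A)ᵀ * fromRows Aᵀ (-1 : Matrix n n ℝ) = 0 := by
  simp [transpose_fromRows, fromCols_mul_fromRows]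

theorem transpose_fromRows_one_zero_mul_fromRows_zero_one :
    (fromRows (1 : Matrix m m ℝ) (0 : Matrix n m ℝ))ᵀ *
      fromRows (0 : Matrix m n ℝ) (1 : Matrix n n ℝ) = 0 := by
  simp [transpose_fromRows, fromCols_mul_fromRows]

omit [DecidableEq m]

theorem isSymm_of_isSymm_fromRows_one_sandwich {Δ1 : Matrix m m ℝ} (hΔ1 : Δ1.IsSymm)
    (Δ2 : Matrix m n ℝ) {Δ3 : Matrix n n ℝ} (X : Matrix m n ℝ)
    (h : ((fromRows X (1 : Matrix n n ℝ))ᵀ * fromBlocks Δ1 Δ2 Δ2ᵀ Δ3 *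
      fromRows X (1 : Matrix n n ℝ)).IsSymm) :
    Δ3.IsSymm := by
  rw [fromRows_sandwich_fromBlocks, IsSymm] at h
  simp only [transpose_add, transpose_mul, transpose_transpose, transpose_one, hΔ1.eq,
    Matrix.mul_one, Matrix.one_mul, Matrix.mul_assoc] at h
  rw [IsSymm]
  have := congrArg (· - (Xᵀ * (Δ1 * X) + Xᵀ * Δ2 + Δ2ᵀ * X)) h
  convert this using 1 <;> abel

theorem isSymm_fromBlocks_neg_data {Δ1 : Matrix m m ℝ} (hΔ1 : Δ1.IsSymm) (Δ2 : Matrix m n ℝ)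
    {Δ3 : Matrix n n ℝ} (hΔ3 : Δ3.IsSymm) (Z : Matrix l m ℝ) (X : Matrix n m ℝ) :
    (fromBlocks (-(Z * Δ1 * Zᵀ)) (-(Z * (Δ1 * Xᵀ + Δ2))) (-(Z * (Δ1 * Xᵀ + Δ2)))ᵀ
      (-((fromRows Xᵀ (1 : Matrix n n ℝ))ᵀ * fromBlocks Δ1 Δ2 Δ2ᵀ Δ3 *
        fromRows Xᵀ (1 : Matrix n n ℝ)))).IsSymm := by
  refine IsSymm.fromBlocks ?_ rfl ((hΔ1.fromBlocks rfl hΔ3).transpose_mul_mul _).neg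
  simpa using (hΔ1.transpose_mul_mul Zᵀ).neg

theorem fromBlocks_data_eq_transpose_mul_mul {Δ1 : Matrix m m ℝ} (hΔ1 : Δ1.IsSymm)
    (Δ2 : Matrix m n ℝ) (Δ3 : Matrix n n ℝ) (Z : Matrix l m ℝ) (X : Matrix n m ℝ) :
    fromBlocks (Z * Δ1 * Zᵀ) (-(Z * (Δ1 * Xᵀ + Δ2))) (-(Z * (Δ1 * Xᵀ + Δ2)))ᵀ
        ((fromRows Xᵀ (1 : Matrix n n ℝ))ᵀ * fromBlocks Δ1 Δ2 Δ2ᵀ Δ3 *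
          fromRows Xᵀ (1 : Matrix n n ℝ)) =
      (fromBlocks (-Zᵀ) Xᵀ (0 : Matrix n l ℝ) 1)ᵀ * fromBlocks Δ1 Δ2 Δ2ᵀ Δ3 *
        fromBlocks (-Zᵀ) Xᵀ (0 : Matrix n l ℝ) 1 := by
  rw [fromBlocks_transpose, fromBlocks_multiply, fromBlocks_multiply,
    fromRows_sandwich_fromBlocks]
  congr 1 <;> simp only [transpose_transpose, transpose_neg, transpose_zero, transpose_one,
    transpose_add, transpose_mul, hΔ1.eq, Matrix.mul_add, Matrix.add_mul, Matrix.mul_neg,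
    Matrix.neg_mul, Matrix.zero_mul, Matrix.mul_zero, Matrix.one_mul, Matrix.mul_one,
    Matrix.mul_assoc, add_zero, neg_neg, neg_add]
  abel

omit [Fintype m] in
theorem fromBlocks_mul_fromRows_one [Fintype l] (Z : Matrix l m ℝ) (X : Matrix n m ℝ)
    (A : Matrix n l ℝ) :
    fromBlocks (-Zᵀ) Xᵀ (0 : Matrix n l ℝ) 1 * fromRows Aᵀ (1 : Matrix n n ℝ) =
      fromRows (X - A * Z)ᵀ (1 : Matrix n n ℝ) := by
  rw [fromBlocks_mul_fromRows]
  simp [transpose_mul, sub_eq_add_neg, add_comm]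

theorem fromRows_neg_one_sandwich_fromBlocks_neg_data [Fintype l] {Δ1 : Matrix m m ℝ}
    (hΔ1 : Δ1.IsSymm) (Δ2 : Matrix m n ℝ) (Δ3 : Matrix n n ℝ) (Z : Matrix l m ℝ)
    (X : Matrix n m ℝ) (A : Matrix n l ℝ) :
    (fromRows Aᵀ (-1 : Matrix n n ℝ))ᵀ *
        fromBlocks (-(Z * Δ1 * Zᵀ)) (-(Z * (Δ1 * Xᵀ + Δ2))) (-(Z * (Δ1 * Xᵀ + Δ2)))ᵀ
          (-((fromRows Xᵀ (1 : Matrix n n ℝ))ᵀ * fromBlocks Δ1 Δ2 Δ2ᵀ Δ3 *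
            fromRows Xᵀ (1 : Matrix n n ℝ))) *
        fromRows Aᵀ (-1 : Matrix n n ℝ) =
      -((fromRows (X - A * Z)ᵀ (1 : Matrix n n ℝ))ᵀ * fromBlocks Δ1 Δ2 Δ2ᵀ Δ3 *
        fromRows (X - A * Z)ᵀ (1 : Matrix n n ℝ)) := by
  rw [fromRows_neg_one_sandwich_fromBlocks_neg, fromBlocks_data_eq_transpose_mul_mul hΔ1,
    ← fromBlocks_mul_fromRows_one, transpose_mul]
  simp only [Matrix.mul_assoc]

end Blocks

end Matrix

theorem stmt6_general {n ℓ D : ℕ}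
    (xp : Fin D → Fin n → ℝ)
    (Δ1 : Matrix (Fin D) (Fin D) ℝ) (Δ2 : Matrix (Fin D) (Fin n) ℝ)
    (Δ3 : Matrix (Fin n) (Fin n) ℝ)
    (hΔ1 : Δ1.PosSemidef)
    -- the evaluated monomial vectors `z(x̃ᵢ, ũᵢ)` and data matrices `X̃⁺`, `Z̃`
    (ζ : Fin D → Fin ℓ → ℝ)
    (Xp : Matrix (Fin n) (Fin D) ℝ) (hXp : ∀ k i, Xp k i = xp i k)
    (Zt : Matrix (Fin ℓ) (Fin D) ℝ) (hZt : ∀ j i, Zt j i = ζ i j)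
    -- the data-dependent matrices `Δ̃₁`, `Δ̃₂`, `Δ̃₃`
    (Δt1 : Matrix (Fin ℓ) (Fin ℓ) ℝ) (hΔt1 : Δt1 = Zt * Δ1 * Ztᵀ)
    (Δt2 : Matrix (Fin ℓ) (Fin n) ℝ) (hΔt2 : Δt2 = -(Zt * (Δ1 * Xpᵀ + Δ2)))
    (Δt3 : Matrix (Fin n) (Fin n) ℝ)
    (hΔt3 : Δt3 = (Matrix.fromRows Xpᵀ (1 : Matrix (Fin n) (Fin n) ℝ))ᵀ *
        Matrix.fromBlocks Δ1 Δ2 Δ2ᵀ Δ3 *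
        Matrix.fromRows Xpᵀ (1 : Matrix (Fin n) (Fin n) ℝ))
    -- (ii) the data is consistent with a ground-truth system
    (hcons : ∃ (Agt : Matrix (Fin n) (Fin ℓ) ℝ) (Dm : Matrix (Fin n) (Fin D) ℝ),
        IsNegDef ((Matrix.fromRows Dmᵀ (1 : Matrix (Fin n) (Fin n) ℝ))ᵀ *
            Matrix.fromBlocks Δ1 Δ2 Δ2ᵀ Δ3 *
            Matrix.fromRows Dmᵀ (1 : Matrix (Fin n) (Fin n) ℝ)) ∧
        ∀ i, xp i = Agt.mulVec (ζ i) + fun k => Dm k i)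
    -- (iii) invertibility, with inverse `[[Δ̄₁, Δ̄₂],[Δ̄₂ᵀ, Δ̄₃]]`
    (Δb1 : Matrix (Fin ℓ) (Fin ℓ) ℝ) (Δb2 : Matrix (Fin ℓ) (Fin n) ℝ)
    (Δb3 : Matrix (Fin n) (Fin n) ℝ)
    (hinv : Matrix.fromBlocks (-Δt1) Δt2 Δt2ᵀ (-Δt3) *
          Matrix.fromBlocks Δb1 Δb2 Δb2ᵀ Δb3 = 1 ∧
        Matrix.fromBlocks Δb1 Δb2 Δb2ᵀ Δb3 *
          Matrix.fromBlocks (-Δt1) Δt2 Δt2ᵀ (-Δt3) = 1) :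
    ((∀ A : Matrix (Fin n) (Fin ℓ) ℝ,
        IsNegDef ((Matrix.fromRows Aᵀ (1 : Matrix (Fin n) (Fin n) ℝ))ᵀ *
            Matrix.fromBlocks Δt1 Δt2 Δt2ᵀ Δt3 *
            Matrix.fromRows Aᵀ (1 : Matrix (Fin n) (Fin n) ℝ)) ↔
        IsNegDef ((Matrix.fromRows (1 : Matrix (Fin ℓ) (Fin ℓ) ℝ) A)ᵀ *
            Matrix.fromBlocks Δb1 Δb2 Δb2ᵀ Δb3 *
            Matrix.fromRows (1 : Matrix (Fin ℓ) (Fin ℓ) ℝ) A)) ∧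
      Δb3.PosSemidef) := by
  obtain ⟨hPQ, -⟩ := hinv
  obtain ⟨Agt, Dm, hgt, hdyn⟩ := hcons
  have hDm : Xp - Agt * Zt = Dm := by
    ext k i
    simp [hXp, hdyn, hZt, mul_apply, mulVec, dotProduct]
  subst hΔt1 hΔt2 hΔt3
  have hΔ1s : Δ1.IsSymm := isHermitian_iff_isSymm.mp hΔ1.isHermitian
  have hΔ3s : Δ3.IsSymm := isSymm_of_isSymm_fromRows_one_sandwich hΔ1s Δ2 Dmᵀ
    (isSymm_neg_iff.mp (isHermitian_iff_isSymm.mp hgt.isHermitian))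
  have hP := isSymm_fromBlocks_neg_data hΔ1s Δ2 hΔ3s Zt Xp
  have hNeg := posSemidef_neg_fromRows_one_zero_sandwich_fromBlocks (n := Fin n) hΔ1 Zt
  have hPos := hgt
  rw [IsNegDef, ← hDm, ← fromRows_neg_one_sandwich_fromBlocks_neg_data hΔ1s] at hPos
  have hE := injective_mulVec_fromRows_left (mulVec_injective_iff_isUnit.mpr isUnit_one)
    (0 : Matrix (Fin n) (Fin ℓ) ℝ)
  refine ⟨fun A => ?_, ?_⟩
  · rw [IsNegDef, IsNegDef, ← fromRows_neg_one_sandwich_fromBlocks_neg]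
    exact posDef_transpose_mul_mul_iff_of_mul_eq_one hP hPQ hE (hNeg _ _ _) hPos (by simp)
      (injective_mulVec_fromRows_right _ (mulVec_injective_iff_isUnit.mpr isUnit_one.neg))
      (injective_mulVec_fromRows_left (mulVec_injective_iff_isUnit.mpr isUnit_one) _)
      (transpose_fromRows_one_mul_fromRows_neg_one A)
  · rw [← fromRows_zero_one_sandwich_fromBlocks Δb1 Δb2 Δb2ᵀ Δb3]
    exact posSemidef_transpose_mul_mul_of_mul_eq_one hP hPQ hE (hNeg _ _ _) hPos (by simp)
      transpose_fromRows_one_zero_mul_fromRows_zero_one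

/-- Lemma 3 (dualization): under `Δ₁ ⪰ 0`, consistency of the data with a ground-truth
system, and invertibility of `[[−Δ̃₁, Δ̃₂],[Δ̃₂ᵀ, −Δ̃₃]]` with inverse
`[[Δ̄₁, Δ̄₂],[Δ̄₂ᵀ, Δ̄₃]]`, a matrix `A` satisfies the primal data-based condition
`[Aᵀ;Iₙ]ᵀ [[Δ̃₁,Δ̃₂],[Δ̃₂ᵀ,Δ̃₃]] [Aᵀ;Iₙ] ≺ 0` iff it satisfies the dual one
`[I_ℓ;A]ᵀ [[Δ̄₁,Δ̄₂],[Δ̄₂ᵀ,Δ̄₃]] [I_ℓ;A] ≺ 0`; moreover `Δ̄₃ ⪰ 0`. -/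
theorem stmt6 {n m ℓ D : ℕ}
    (z : Fin ℓ → MvPolynomial (Fin (n + m)) ℝ)
    (xp xd : Fin D → Fin n → ℝ) (ud : Fin D → Fin m → ℝ)
    (Δ1 : Matrix (Fin D) (Fin D) ℝ) (Δ2 : Matrix (Fin D) (Fin n) ℝ)
    (Δ3 : Matrix (Fin n) (Fin n) ℝ)
    (hΔ1 : Δ1.PosSemidef)
    -- the evaluated monomial vectors `z(x̃ᵢ, ũᵢ)` and data matrices `X̃⁺`, `Z̃`
    (ζ : Fin D → Fin ℓ → ℝ)
    (hζ : ∀ i j, ζ i j = MvPolynomial.eval (Fin.append (xd i) (ud i)) (z j))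
    (Xp : Matrix (Fin n) (Fin D) ℝ) (hXp : ∀ k i, Xp k i = xp i k)
    (Zt : Matrix (Fin ℓ) (Fin D) ℝ) (hZt : ∀ j i, Zt j i = ζ i j)
    -- the data-dependent matrices `Δ̃₁`, `Δ̃₂`, `Δ̃₃`
    (Δt1 : Matrix (Fin ℓ) (Fin ℓ) ℝ) (hΔt1 : Δt1 = Zt * Δ1 * Ztᵀ)
    (Δt2 : Matrix (Fin ℓ) (Fin n) ℝ) (hΔt2 : Δt2 = -(Zt * (Δ1 * Xpᵀ + Δ2)))
    (Δt3 : Matrix (Fin n) (Fin n) ℝ)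
    (hΔt3 : Δt3 = (Matrix.fromRows Xpᵀ (1 : Matrix (Fin n) (Fin n) ℝ))ᵀ *
        Matrix.fromBlocks Δ1 Δ2 Δ2ᵀ Δ3 *
        Matrix.fromRows Xpᵀ (1 : Matrix (Fin n) (Fin n) ℝ))
    -- (ii) the data is consistent with a ground-truth system
    (hcons : ∃ (Agt : Matrix (Fin n) (Fin ℓ) ℝ) (Dm : Matrix (Fin n) (Fin D) ℝ),
        IsNegDef ((Matrix.fromRows Dmᵀ (1 : Matrix (Fin n) (Fin n) ℝ))ᵀ *
            Matrix.fromBlocks Δ1 Δ2 Δ2ᵀ Δ3 *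
            Matrix.fromRows Dmᵀ (1 : Matrix (Fin n) (Fin n) ℝ)) ∧
        ∀ i, xp i = Agt.mulVec (ζ i) + fun k => Dm k i)
    -- (iii) invertibility, with inverse `[[Δ̄₁, Δ̄₂],[Δ̄₂ᵀ, Δ̄₃]]`
    (Δb1 : Matrix (Fin ℓ) (Fin ℓ) ℝ) (Δb2 : Matrix (Fin ℓ) (Fin n) ℝ)
    (Δb3 : Matrix (Fin n) (Fin n) ℝ)
    (hinv : Matrix.fromBlocks (-Δt1) Δt2 Δt2ᵀ (-Δt3) *
          Matrix.fromBlocks Δb1 Δb2 Δb2ᵀ Δb3 = 1 ∧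
        Matrix.fromBlocks Δb1 Δb2 Δb2ᵀ Δb3 *
          Matrix.fromBlocks (-Δt1) Δt2 Δt2ᵀ (-Δt3) = 1) :
    ((∀ A : Matrix (Fin n) (Fin ℓ) ℝ,
        IsNegDef ((Matrix.fromRows Aᵀ (1 : Matrix (Fin n) (Fin n) ℝ))ᵀ *
            Matrix.fromBlocks Δt1 Δt2 Δt2ᵀ Δt3 *
            Matrix.fromRows Aᵀ (1 : Matrix (Fin n) (Fin n) ℝ)) ↔
        IsNegDef ((Matrix.fromRows (1 : Matrix (Fin ℓ) (Fin ℓ) ℝ) A)ᵀ *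
            Matrix.fromBlocks Δb1 Δb2 Δb2ᵀ Δb3 *
            Matrix.fromRows (1 : Matrix (Fin ℓ) (Fin ℓ) ℝ) A)) ∧
      Δb3.PosSemidef) :=
  stmt6_general xp Δ1 Δ2 Δ3 hΔ1 ζ Xp hXp Zt hZt Δt1 hΔt1 Δt2 hΔt2 Δt3 hΔt3 hcons Δb1 Δb2 Δb3 hinv
end
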